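/- Let n ≥ 1. For every smooth function f : ℝ^n × ℝ^n × ℝ^n → ℂ one has the mixed commutator identities D_t(X_s f) − X_s(D_t f) = 𝒪 f and D_s(X_t f) − X_t(D_s f) = −𝒪 f, where 𝒪 f = Σ_{j=1}^n ( i (x_j ∂f/∂y_j − y_j ∂f/∂x_j) + ∂²f/∂q_j² − q_j² f ). -/

import Mathlib

open Complex Finset Matrix

noncomputable section

/-- A point of `ℝ^n × ℝ^n × ℝ^n`, with coordinates `(x, y, q)`. -/
abbrev Vec (n : ℕ) := (Fin n → ℝ) × (Fin n → ℝ) × (Fin n → ℝ)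

/-- Partial derivative in the variable `x_j`. -/
noncomputable def pdx (n : ℕ) (j : Fin n) (f : Vec n → ℂ) : Vec n → ℂ :=
  fun p => deriv (fun t => f (Function.update p.1 j t, p.2.1, p.2.2)) (p.1 j)

/-- Partial derivative in the variable `y_j`. -/
noncomputable def pdy (n : ℕ) (j : Fin n) (f : Vec n → ℂ) : Vec n → ℂ :=
  fun p => deriv (fun t => f (p.1, Function.update p.2.1 j t, p.2.2)) (p.2.1 j)

/-- Partial derivative in the variable `q_j`. -/
noncomputable def pdq (n : ℕ) (j : Fin n) (f : Vec n → ℂ) : Vec n → ℂ :=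
  fun p => deriv (fun t => f (p.1, p.2.1, Function.update p.2.2 j t)) (p.2.2 j)

/-- The symplectic Dirac operator `D_s f = Σ_j (i q_j ∂f/∂y_j − ∂²f/∂q_j∂x_j)`. -/
noncomputable def Ds (n : ℕ) (f : Vec n → ℂ) : Vec n → ℂ :=
  fun p => ∑ j : Fin n, (Complex.I * (p.2.2 j : ℂ) * pdy n j f p - pdq n j (pdx n j f) p)

/-- The twisted symplectic Dirac operator `D_t f = Σ_j (i q_j ∂f/∂x_j + ∂²f/∂y_j∂q_j)`. -/
noncomputable def Dt (n : ℕ) (f : Vec n → ℂ) : Vec n → ℂ :=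
  fun p => ∑ j : Fin n, (Complex.I * (p.2.2 j : ℂ) * pdx n j f p + pdy n j (pdq n j f) p)

/-- The Fischer dual `X_s f = Σ_j (y_j ∂f/∂q_j + i q_j x_j f)`. -/
noncomputable def Xs (n : ℕ) (f : Vec n → ℂ) : Vec n → ℂ :=
  fun p => ∑ j : Fin n, ((p.2.1 j : ℂ) * pdq n j f p + Complex.I * (p.2.2 j : ℂ) * (p.1 j : ℂ) * f p)

/-- The Fischer dual `X_t f = Σ_j (x_j ∂f/∂q_j − i y_j q_j f)`. -/
noncomputable def Xt (n : ℕ) (f : Vec n → ℂ) : Vec n → ℂ :=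
  fun p => ∑ j : Fin n, ((p.1 j : ℂ) * pdq n j f p - Complex.I * (p.2.1 j : ℂ) * (p.2.2 j : ℂ) * f p)

/-- The Euler operator `𝔼 f = Σ_j (x_j ∂f/∂x_j + y_j ∂f/∂y_j)`. -/
noncomputable def EulerOp (n : ℕ) (f : Vec n → ℂ) : Vec n → ℂ :=
  fun p => ∑ j : Fin n, ((p.1 j : ℂ) * pdx n j f p + (p.2.1 j : ℂ) * pdy n j f p)

/-- The Laplacian in the `(x,y)` variables. -/
noncomputable def Lap (n : ℕ) (f : Vec n → ℂ) : Vec n → ℂ :=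
  fun p => ∑ j : Fin n, (pdx n j (pdx n j f) p + pdy n j (pdy n j f) p)
/-- The operator `𝒪 f = Σ_j ( i (x_j ∂f/∂y_j − y_j ∂f/∂x_j) + ∂²f/∂q_j² − q_j² f )`. -/
noncomputable def Oop (n : ℕ) (f : Vec n → ℂ) : Vec n → ℂ :=
  fun p => ∑ j : Fin n,
    (Complex.I * ((p.1 j : ℂ) * pdy n j f p - (p.2.1 j : ℂ) * pdx n j f p)
      + pdq n j (pdq n j f) p - (p.2.2 j : ℂ) ^ 2 * f p)

/-!
Each of the four operators is a sum over `j` of pieces involving only the variables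
`x_j, y_j, q_j`, and pieces with different indices commute. The commutators therefore reduce to
the diagonal ones `[D_{t,j}, X_{s,j}]` and `[D_{s,j}, X_{t,j}]`, which the product rule, `i² = -1`
and the symmetry of second and third derivatives of a smooth function identify with `±𝒪_j`.
On smooth functions the partial derivatives are the directional derivatives `p ↦ Df(p) v` along
coordinate unit vectors.
-/

open scoped ContDiff

theorem commutator_sum_sum {X ι M : Type*} [Fintype ι] [AddCommGroup M]
    {A B : ι → (X → M) → X → M} (P : (X → M) → Prop)
    (hA : ∀ i (G : ι → X → M), (∀ k, P (G k)) →
      A i (fun p => ∑ k, G k p) = fun p => ∑ k, A i (G k) p)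
    (hB : ∀ i (G : ι → X → M), (∀ k, P (G k)) →
      B i (fun p => ∑ k, G k p) = fun p => ∑ k, B i (G k) p)
    (hPA : ∀ i g, P g → P (A i g)) (hPB : ∀ i g, P g → P (B i g)) {f : X → M} (hf : P f)
    (p : X) :
    ∑ j, A j (fun p => ∑ k, B k f p) p - ∑ k, B k (fun p => ∑ j, A j f p) p =
      ∑ j, ∑ k, (A j (B k f) p - B k (A j f) p) := by
  simp only [hA _ _ fun k => hPB k f hf, hB _ _ fun j => hPA j f hf, sum_sub_distrib]
  rw [sum_comm (f := fun k j => B k (A j f) p)]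

@[fun_prop]
theorem Complex.contDiff_ofReal {m : WithTop ℕ∞} : ContDiff ℝ m ((↑) : ℝ → ℂ) :=
  ofRealCLM.contDiff

section DirDeriv

variable {E F : Type*} [NormedAddCommGroup E] [NormedSpace ℝ E]
  [NormedAddCommGroup F] [NormedSpace ℝ F]

def dirDeriv (v : E) (g : E → F) : E → F := fun p => fderiv ℝ g p v

@[fun_prop]
theorem ContDiff.dirDeriv {g : E → F} (hg : ContDiff ℝ ∞ g) (v : E) :
    ContDiff ℝ ∞ (dirDeriv v g) :=
  (hg.fderiv_right le_rfl).clm_apply contDiff_const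

theorem dirDeriv_add {g h : E → F}
    (hg : Differentiable ℝ g) (hh : Differentiable ℝ h) (v : E) :
    dirDeriv v (fun p => g p + h p) = fun p => dirDeriv v g p + dirDeriv v h p := by
  ext p
  simp [dirDeriv, fderiv_fun_add (hg p) (hh p)]

theorem dirDeriv_sub {g h : E → F}
    (hg : Differentiable ℝ g) (hh : Differentiable ℝ h) (v : E) :
    dirDeriv v (fun p => g p - h p) = fun p => dirDeriv v g p - dirDeriv v h p := by
  ext p
  simp [dirDeriv, fderiv_fun_sub (hg p) (hh p)]

theorem dirDeriv_sum {ι : Type*} {s : Finset ι} {g : ι → E → F}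
    (hg : ∀ i ∈ s, Differentiable ℝ (g i)) (v : E) :
    dirDeriv v (fun p => ∑ i ∈ s, g i p) = fun p => ∑ i ∈ s, dirDeriv v (g i) p := by
  ext p
  simp [dirDeriv, fderiv_fun_sum fun i hi => hg i hi p]

theorem dirDeriv_const (c : F) (v : E) : dirDeriv v (fun _ : E => c) = fun _ => 0 := by
  ext p
  simp [dirDeriv]

theorem dirDeriv_mul {𝔸 : Type*} [NormedCommRing 𝔸] [NormedAlgebra ℝ 𝔸] {g h : E → 𝔸}
    (hg : Differentiable ℝ g) (hh : Differentiable ℝ h) (v : E) :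
    dirDeriv v (fun p => g p * h p) = fun p => dirDeriv v g p * h p + g p * dirDeriv v h p := by
  ext p
  simp [dirDeriv, fderiv_fun_mul (hg p) (hh p), add_comm, mul_comm]

theorem dirDeriv_ofReal_comp_clm (L : E →L[ℝ] ℝ) (v : E) :
    dirDeriv v (fun p => (L p : ℂ)) = fun _ => (L v : ℂ) := by
  ext p
  change fderiv ℝ (Complex.ofRealCLM.comp L) p v = _
  rw [ContinuousLinearMap.fderiv]
  rfl

theorem dirDeriv_comm {m : WithTop ℕ∞} {g : E → F} (hg : ContDiff ℝ m g) (hm : 2 ≤ m)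
    (u v : E) : dirDeriv u (dirDeriv v g) = dirDeriv v (dirDeriv u g) := by
  have hg' : Differentiable ℝ (fderiv ℝ g) :=
    (hg.fderiv_right (m := 1) hm).differentiable one_ne_zero
  have second (u v p : E) : dirDeriv u (dirDeriv v g) p = fderiv ℝ (fderiv ℝ g) p u v := by
    change fderiv ℝ (fun q => fderiv ℝ g q v) p u = _
    simp [fderiv_clm_apply (hg' p) (differentiableAt_const v)]
  ext p
  rw [second, second]
  exact hg.contDiffAt.isSymmSndFDerivAt (by simpa [minSmoothness_of_isRCLikeNormedField]) u v

end DirDeriv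

section Coordinates

variable {n : ℕ}

def unitX (j : Fin n) : Vec n := (Pi.single j 1, 0, 0)
def unitY (j : Fin n) : Vec n := (0, Pi.single j 1, 0)
def unitQ (j : Fin n) : Vec n := (0, 0, Pi.single j 1)

@[simp] theorem unitX_fst (j : Fin n) : (unitX j).1 = Pi.single j 1 := rfl
@[simp] theorem unitX_snd (j : Fin n) : (unitX j).2 = 0 := rfl
@[simp] theorem unitY_fst (j : Fin n) : (unitY j).1 = 0 := rfl
@[simp] theorem unitY_snd_fst (j : Fin n) : (unitY j).2.1 = Pi.single j 1 := rfl
@[simp] theorem unitY_snd_snd (j : Fin n) : (unitY j).2.2 = 0 := rfl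
@[simp] theorem unitQ_fst (j : Fin n) : (unitQ j).1 = 0 := rfl
@[simp] theorem unitQ_snd_fst (j : Fin n) : (unitQ j).2.1 = 0 := rfl
@[simp] theorem unitQ_snd_snd (j : Fin n) : (unitQ j).2.2 = Pi.single j 1 := rfl

theorem pdx_eq_dirDeriv {g : Vec n → ℂ} (hg : Differentiable ℝ g) (j : Fin n) :
    pdx n j g = dirDeriv (unitX j) g := by
  ext p
  have hcurve : HasDerivAt (fun t => ((Function.update p.1 j t, p.2.1, p.2.2) : Vec n))
      (unitX j) (p.1 j) :=
    (hasDerivAt_update p.1 j _).prodMk (hasDerivAt_const _ _)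
  exact ((hg _).hasFDerivAt.comp_hasDerivAt_of_eq _ hcurve (by simp)).deriv

theorem pdy_eq_dirDeriv {g : Vec n → ℂ} (hg : Differentiable ℝ g) (j : Fin n) :
    pdy n j g = dirDeriv (unitY j) g := by
  ext p
  have hcurve : HasDerivAt (fun t => ((p.1, Function.update p.2.1 j t, p.2.2) : Vec n))
      (unitY j) (p.2.1 j) :=
    (hasDerivAt_const _ _).prodMk ((hasDerivAt_update p.2.1 j _).prodMk (hasDerivAt_const _ _))
  exact ((hg _).hasFDerivAt.comp_hasDerivAt_of_eq _ hcurve (by simp)).deriv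

theorem pdq_eq_dirDeriv {g : Vec n → ℂ} (hg : Differentiable ℝ g) (j : Fin n) :
    pdq n j g = dirDeriv (unitQ j) g := by
  ext p
  have hcurve : HasDerivAt (fun t => ((p.1, p.2.1, Function.update p.2.2 j t) : Vec n))
      (unitQ j) (p.2.2 j) :=
    (hasDerivAt_const _ _).prodMk ((hasDerivAt_const _ _).prodMk (hasDerivAt_update p.2.2 j _))
  exact ((hg _).hasFDerivAt.comp_hasDerivAt_of_eq _ hcurve (by simp)).deriv

open ContinuousLinearMap in
theorem dirDeriv_coordX (k : Fin n) (v : Vec n) :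
    dirDeriv v (fun p : Vec n => (p.1 k : ℂ)) = fun _ => (v.1 k : ℂ) :=
  dirDeriv_ofReal_comp_clm ((proj k).comp (fst ℝ _ _)) v

open ContinuousLinearMap in
theorem dirDeriv_coordY (k : Fin n) (v : Vec n) :
    dirDeriv v (fun p : Vec n => (p.2.1 k : ℂ)) = fun _ => (v.2.1 k : ℂ) :=
  dirDeriv_ofReal_comp_clm ((proj k).comp ((fst ℝ _ _).comp (snd ℝ _ _))) v

open ContinuousLinearMap in
theorem dirDeriv_coordQ (k : Fin n) (v : Vec n) :
    dirDeriv v (fun p : Vec n => (p.2.2 k : ℂ)) = fun _ => (v.2.2 k : ℂ) :=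
  dirDeriv_ofReal_comp_clm ((proj k).comp ((snd ℝ _ _).comp (snd ℝ _ _))) v

end Coordinates

section Summands

variable {n : ℕ}

def Dt.summand (j : Fin n) (g : Vec n → ℂ) : Vec n → ℂ := fun p =>
  I * (p.2.2 j : ℂ) * dirDeriv (unitX j) g p + dirDeriv (unitY j) (dirDeriv (unitQ j) g) p

def Xs.summand (j : Fin n) (g : Vec n → ℂ) : Vec n → ℂ := fun p =>
  (p.2.1 j : ℂ) * dirDeriv (unitQ j) g p + I * (p.2.2 j : ℂ) * (p.1 j : ℂ) * g p

def Ds.summand (j : Fin n) (g : Vec n → ℂ) : Vec n → ℂ := fun p =>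
  I * (p.2.2 j : ℂ) * dirDeriv (unitY j) g p - dirDeriv (unitQ j) (dirDeriv (unitX j) g) p

def Xt.summand (j : Fin n) (g : Vec n → ℂ) : Vec n → ℂ := fun p =>
  (p.1 j : ℂ) * dirDeriv (unitQ j) g p - I * (p.2.1 j : ℂ) * (p.2.2 j : ℂ) * g p

def Oop.summand (j : Fin n) (g : Vec n → ℂ) : Vec n → ℂ := fun p =>
  I * ((p.1 j : ℂ) * dirDeriv (unitY j) g p - (p.2.1 j : ℂ) * dirDeriv (unitX j) g p)
    + dirDeriv (unitQ j) (dirDeriv (unitQ j) g) p - (p.2.2 j : ℂ) ^ 2 * g p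

variable {g : Vec n → ℂ}

theorem Dt_eq_sum_summand (hg : ContDiff ℝ ∞ g) :
    Dt n g = fun p => ∑ j, Dt.summand j g p := by
  unfold Dt Dt.summand
  simp (disch := fun_prop (disch := simp)) only [pdx_eq_dirDeriv, pdy_eq_dirDeriv, pdq_eq_dirDeriv]

theorem Xs_eq_sum_summand (hg : ContDiff ℝ ∞ g) :
    Xs n g = fun p => ∑ j, Xs.summand j g p := by
  unfold Xs Xs.summand
  simp (disch := fun_prop (disch := simp)) only [pdq_eq_dirDeriv]

theorem Ds_eq_sum_summand (hg : ContDiff ℝ ∞ g) :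
    Ds n g = fun p => ∑ j, Ds.summand j g p := by
  unfold Ds Ds.summand
  simp (disch := fun_prop (disch := simp)) only [pdx_eq_dirDeriv, pdy_eq_dirDeriv, pdq_eq_dirDeriv]

theorem Xt_eq_sum_summand (hg : ContDiff ℝ ∞ g) :
    Xt n g = fun p => ∑ j, Xt.summand j g p := by
  unfold Xt Xt.summand
  simp (disch := fun_prop (disch := simp)) only [pdq_eq_dirDeriv]

theorem Oop_eq_sum_summand (hg : ContDiff ℝ ∞ g) :
    Oop n g = fun p => ∑ j, Oop.summand j g p := by
  unfold Oop Oop.summand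
  simp (disch := fun_prop (disch := simp)) only [pdx_eq_dirDeriv, pdy_eq_dirDeriv, pdq_eq_dirDeriv]

@[fun_prop]
theorem ContDiff.Dt_summand (hg : ContDiff ℝ ∞ g) (j : Fin n) :
    ContDiff ℝ ∞ (Dt.summand j g) := by
  unfold Dt.summand; fun_prop

@[fun_prop]
theorem ContDiff.Xs_summand (hg : ContDiff ℝ ∞ g) (j : Fin n) :
    ContDiff ℝ ∞ (Xs.summand j g) := by
  unfold Xs.summand; fun_prop

@[fun_prop]
theorem ContDiff.Ds_summand (hg : ContDiff ℝ ∞ g) (j : Fin n) :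
    ContDiff ℝ ∞ (Ds.summand j g) := by
  unfold Ds.summand; fun_prop

@[fun_prop]
theorem ContDiff.Xt_summand (hg : ContDiff ℝ ∞ g) (j : Fin n) :
    ContDiff ℝ ∞ (Xt.summand j g) := by
  unfold Xt.summand; fun_prop

variable {ι : Type*} [Fintype ι] {G : ι → Vec n → ℂ}

theorem Dt.summand_sum (j : Fin n) (hG : ∀ i, ContDiff ℝ ∞ (G i)) :
    Dt.summand j (fun p => ∑ i, G i p) = fun p => ∑ i, Dt.summand j (G i) p := by
  unfold Dt.summand
  simp (disch := intros; fun_prop (disch := simp)) only [dirDeriv_sum, mul_sum, ← sum_add_distrib]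

theorem Xs.summand_sum (j : Fin n) (hG : ∀ i, ContDiff ℝ ∞ (G i)) :
    Xs.summand j (fun p => ∑ i, G i p) = fun p => ∑ i, Xs.summand j (G i) p := by
  unfold Xs.summand
  simp (disch := intros; fun_prop (disch := simp)) only [dirDeriv_sum, mul_sum, ← sum_add_distrib]

theorem Ds.summand_sum (j : Fin n) (hG : ∀ i, ContDiff ℝ ∞ (G i)) :
    Ds.summand j (fun p => ∑ i, G i p) = fun p => ∑ i, Ds.summand j (G i) p := by
  unfold Ds.summand
  simp (disch := intros; fun_prop (disch := simp)) only [dirDeriv_sum, mul_sum, ← sum_sub_distrib]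

theorem Xt.summand_sum (j : Fin n) (hG : ∀ i, ContDiff ℝ ∞ (G i)) :
    Xt.summand j (fun p => ∑ i, G i p) = fun p => ∑ i, Xt.summand j (G i) p := by
  unfold Xt.summand
  simp (disch := intros; fun_prop (disch := simp)) only [dirDeriv_sum, mul_sum, ← sum_sub_distrib]

end Summands

section Commutators

variable {n : ℕ} {f : Vec n → ℂ}

theorem commutator_Dt_summand_Xs_summand (hf : ContDiff ℝ ∞ f) (j k : Fin n) (p : Vec n) :
    Dt.summand j (Xs.summand k f) p - Xs.summand k (Dt.summand j f) p =
      if j = k then Oop.summand j f p else 0 := by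
  unfold Dt.summand Xs.summand Oop.summand
  simp (disch := fun_prop (disch := simp)) only [dirDeriv_add, dirDeriv_mul, dirDeriv_const,
    dirDeriv_coordX, dirDeriv_coordY, dirDeriv_coordQ]
  simp only [unitX_fst, unitX_snd, unitY_fst, unitY_snd_fst, unitY_snd_snd, unitQ_fst,
    unitQ_snd_fst, unitQ_snd_snd, Prod.fst_zero, Prod.snd_zero, Pi.zero_apply, Pi.single_apply,
    apply_ite ((↑) : ℝ → ℂ), Complex.ofReal_zero, Complex.ofReal_one, eq_comm (a := k)]
  have hxq := congrFun (dirDeriv_comm hf (by decide) (unitX j) (unitQ k)) p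
  have hyqq : dirDeriv (unitQ k) (dirDeriv (unitY j) (dirDeriv (unitQ j) f)) p =
      dirDeriv (unitY j) (dirDeriv (unitQ j) (dirDeriv (unitQ k) f)) p := by
    rw [dirDeriv_comm (hf.dirDeriv _) (by decide), dirDeriv_comm hf (by decide) (unitQ k)]
  split_ifs with hjk
  · subst hjk
    linear_combination I * (p.2.2 j : ℂ) * (p.2.1 j : ℂ) * hxq - (p.2.1 j : ℂ) * hyqq
      + (p.2.2 j : ℂ) ^ 2 * f p * I_sq
  · linear_combination I * (p.2.2 j : ℂ) * (p.2.1 k : ℂ) * hxq - (p.2.1 k : ℂ) * hyqq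

theorem commutator_Ds_summand_Xt_summand (hf : ContDiff ℝ ∞ f) (j k : Fin n) (p : Vec n) :
    Ds.summand j (Xt.summand k f) p - Xt.summand k (Ds.summand j f) p =
      if j = k then -Oop.summand j f p else 0 := by
  unfold Ds.summand Xt.summand Oop.summand
  simp (disch := fun_prop (disch := simp)) only [dirDeriv_add, dirDeriv_sub, dirDeriv_mul,
    dirDeriv_const, dirDeriv_coordX, dirDeriv_coordY, dirDeriv_coordQ]
  simp only [unitX_fst, unitX_snd, unitY_fst, unitY_snd_fst, unitY_snd_snd, unitQ_fst,
    unitQ_snd_fst, unitQ_snd_snd, Prod.fst_zero, Prod.snd_zero, Pi.zero_apply, Pi.single_apply,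
    apply_ite ((↑) : ℝ → ℂ), Complex.ofReal_zero, Complex.ofReal_one, eq_comm (a := k)]
  have hyq := congrFun (dirDeriv_comm hf (by decide) (unitY j) (unitQ k)) p
  have hqxq : dirDeriv (unitQ k) (dirDeriv (unitQ j) (dirDeriv (unitX j) f)) p =
      dirDeriv (unitQ j) (dirDeriv (unitX j) (dirDeriv (unitQ k) f)) p := by
    rw [dirDeriv_comm (hf.dirDeriv _) (by decide), dirDeriv_comm hf (by decide) (unitQ k)]
  split_ifs with hjk
  · subst hjk
    linear_combination I * (p.2.2 j : ℂ) * (p.1 j : ℂ) * hyq + (p.1 j : ℂ) * hqxq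
      - (p.2.2 j : ℂ) ^ 2 * f p * I_sq
  · linear_combination I * (p.2.2 j : ℂ) * (p.1 k : ℂ) * hyq + (p.1 k : ℂ) * hqxq

theorem commutator_Dt_Xs (hf : ContDiff ℝ ∞ f) :
    (fun p => Dt n (Xs n f) p - Xs n (Dt n f) p) = Oop n f := by
  have hXs : ContDiff ℝ ∞ (Xs n f) := by rw [Xs_eq_sum_summand hf]; fun_prop
  have hDt : ContDiff ℝ ∞ (Dt n f) := by rw [Dt_eq_sum_summand hf]; fun_prop
  ext p
  rw [Dt_eq_sum_summand hXs, Xs_eq_sum_summand hDt, Xs_eq_sum_summand hf, Dt_eq_sum_summand hf,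
    Oop_eq_sum_summand hf]
  rw [commutator_sum_sum (ContDiff ℝ ∞)
    (fun j _ => Dt.summand_sum j) (fun k _ => Xs.summand_sum k)
    (fun j _ hg => hg.Dt_summand j) (fun k _ hg => hg.Xs_summand k) hf]
  simp [commutator_Dt_summand_Xs_summand hf]

theorem commutator_Ds_Xt (hf : ContDiff ℝ ∞ f) :
    (fun p => Ds n (Xt n f) p - Xt n (Ds n f) p) = fun p => -Oop n f p := by
  have hXt : ContDiff ℝ ∞ (Xt n f) := by rw [Xt_eq_sum_summand hf]; fun_prop
  have hDs : ContDiff ℝ ∞ (Ds n f) := by rw [Ds_eq_sum_summand hf]; fun_prop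
  ext p
  rw [Ds_eq_sum_summand hXt, Xt_eq_sum_summand hDs, Xt_eq_sum_summand hf, Ds_eq_sum_summand hf,
    Oop_eq_sum_summand hf]
  rw [commutator_sum_sum (ContDiff ℝ ∞)
    (fun j _ => Ds.summand_sum j) (fun k _ => Xt.summand_sum k)
    (fun j _ hg => hg.Ds_summand j) (fun k _ hg => hg.Xt_summand k) hf]
  simp [commutator_Ds_summand_Xt_summand hf]

end Commutators

theorem mixed_commutators_give_Oop_general
    (n : ℕ) (f : Vec n → ℂ) (hf : ContDiff ℝ (⊤ : ℕ∞) f) :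
    ((fun p => Dt n (Xs n f) p - Xs n (Dt n f) p) = Oop n f) ∧
    ((fun p => Ds n (Xt n f) p - Xt n (Ds n f) p) = (fun p => -(Oop n f p))) :=
  ⟨commutator_Dt_Xs hf, commutator_Ds_Xt hf⟩

theorem mixed_commutators_give_Oop
    (n : ℕ) (hn : 1 ≤ n) (f : Vec n → ℂ) (hf : ContDiff ℝ (⊤ : ℕ∞) f) :
    ((fun p => Dt n (Xs n f) p - Xs n (Dt n f) p) = Oop n f) ∧
    ((fun p => Ds n (Xt n f) p - Xt n (Ds n f) p) = (fun p => -(Oop n f p))) :=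
  mixed_commutators_give_Oop_general n f hf
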